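/- arXiv:2409.15691 — 3 statements merged into one kernel-verified Lean document; each statement's English description precedes it below -/
import Mathlib

section
/- For diagonal matrices $x_1 = \mathrm{diag}(\alpha_1,\dots,\alpha_n)$ and $x_2 = \mathrm{diag}(\beta_1,\dots,\beta_{n+1})$, one has the expansion $\det(x_1 \otimes I_{n+1} + I_n \otimes x_2) = \sum_{\lambda \subset n \times (n+1)} m_{n+1-\lambda}(\alpha_1,\dots,\alpha_n)\, b_\lambda$, where the sum is over partitions $\lambda = (\lambda_1 \ge \cdots \ge \lambda_n)$ with $\lambda_1 \le n+1$, $b_\lambda = \prod_i b_{\lambda_i}$ with $b_j = e_j(\beta_1,\dots,\beta_{n+1})$, and $n+1-\lambda$ is the partition $(n+1-\lambda_n \ge \cdots \ge n+1-\lambda_1)$. -/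
/-- The monomial symmetric polynomial in `n` variables attached to the exponent
vector `lam : Fin n → ℕ`: the sum of all distinct monomials obtained by permuting
the exponent vector. -/
def msym {R : Type*} [CommRing R] (n : ℕ) (lam : Fin n → ℕ) (α : Fin n → R) : R :=
  ∑ v ∈ Finset.image (fun σ : Equiv.Perm (Fin n) => lam ∘ σ) Finset.univ, ∏ i, α i ^ v i

/-- The `k`-th elementary symmetric polynomial in the `n` variables `α`. -/
def esym {R : Type*} [CommRing R] (n k : ℕ) (α : Fin n → R) : R :=
  ∑ s ∈ Finset.powersetCard k (Finset.univ : Finset (Fin n)), ∏ i ∈ s, α i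

/-- The finset of partitions `λ = (λ₁ ≥ ⋯ ≥ λ_n)` with `n` parts (allowing zero parts),
each part at most `B`; i.e. partitions whose Young diagram fits in an `n × B` box,
encoded as weakly decreasing functions `Fin n → ℕ`. -/
def partsBdd (n B : ℕ) : Finset (Fin n → ℕ) :=
  ((Finset.univ : Finset (Fin n → Fin (B + 1))).filter
      (fun f => ∀ i j : Fin n, i ≤ j → (f j : ℕ) ≤ (f i : ℕ))).image
    (fun f i => (f i : ℕ))

/-!
The matrix is diagonal with entries `αᵢ + βⱼ`, so its determinant is `∏ᵢ ∏ⱼ (αᵢ + βⱼ)`, and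
`∏ⱼ (a + βⱼ) = ∑ₖ aᵏ e_{n+1-k}(β)`. Expanding the product over `i` gives a sum over exponent
vectors `c`; grouping them by their sorted rearrangement `μ = n + 1 - λ`, each class is the
orbit of `μ` under permutations, on which the `e`-factor is constant and the `α`-monomials
add up to `m_μ(α)`.
-/

open Kronecker

open Finset

theorem Matrix.det_diagonal_kronecker_one_add_one_kronecker_diagonal {m n R : Type*}
    [Fintype m] [Fintype n] [DecidableEq m] [DecidableEq n] [CommRing R] (a : m → R) (b : n → R) :
    (diagonal a ⊗ₖ (1 : Matrix n n R) + (1 : Matrix m m R) ⊗ₖ diagonal b).det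
      = ∏ i, ∏ j, (a i + b j) := by
  rw [← diagonal_one, ← diagonal_one, diagonal_kronecker_diagonal, diagonal_kronecker_diagonal,
    diagonal_add, det_diagonal, Fintype.prod_prod_type]
  simp

section SymmetricFunctions

variable {R : Type*} [CommRing R]

theorem prod_add_eq_sum_esym_mul_pow {m : ℕ} (a : R) (β : Fin m → R) :
    ∏ j, (a + β j) = ∑ k ∈ range (m + 1), esym m k β * a ^ (m - k) := by
  calc ∏ j, (a + β j) = ∏ j, (β j + a) := by simp_rw [add_comm]
    _ = ∑ t ∈ univ.powerset, (∏ j ∈ t, β j) * a ^ (m - #t) := by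
      rw [prod_add]
      simp_rw [prod_const, card_univ_sdiff, Fintype.card_fin]
    _ = _ := by
      rw [sum_powerset, card_univ, Fintype.card_fin]
      refine sum_congr rfl fun k _ => ?_
      rw [esym, sum_mul]
      exact sum_congr rfl fun t ht => by rw [(mem_powersetCard.1 ht).2]

theorem prod_add_eq_sum_pow_mul_esym {m : ℕ} (a : R) (β : Fin m → R) :
    ∏ j, (a + β j) = ∑ k ∈ range (m + 1), a ^ k * esym m (m - k) β := by
  rw [prod_add_eq_sum_esym_mul_pow, ← sum_range_reflect (fun k => a ^ k * esym m (m - k) β)]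
  refine sum_congr rfl fun k hk => ?_
  have hk : k ≤ m := Nat.lt_succ_iff.mp (mem_range.mp hk)
  rw [mul_comm, Nat.add_sub_cancel, Nat.sub_sub_self hk]

theorem sum_orbit_prod_pow_mul {n : ℕ} (μ : Fin n → ℕ) (α : Fin n → R) (g : ℕ → R) :
    ∑ c ∈ univ.image (fun σ : Equiv.Perm (Fin n) => μ ∘ σ), ∏ i, α i ^ c i * g (c i)
      = msym n μ α * ∏ i, g (μ i) := by
  rw [msym, sum_mul]
  refine sum_congr rfl fun c hc => ?_
  obtain ⟨σ, -, rfl⟩ := mem_image.mp hc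
  rw [prod_mul_distrib]
  congr 1
  exact Equiv.prod_comp σ (fun i => g (μ i))

end SymmetricFunctions

theorem Tuple.comp_sort_eq_iff_exists_comp_perm {α : Type*} [LinearOrder α] {n : ℕ}
    {μ c : Fin n → α} (hμ : Monotone μ) :
    c ∘ Tuple.sort c = μ ↔ ∃ σ : Equiv.Perm (Fin n), μ ∘ σ = c := by
  constructor
  · rintro rfl
    exact ⟨(Tuple.sort c)⁻¹, by ext i; simp⟩
  · rintro ⟨σ, rfl⟩
    rw [Tuple.comp_perm_comp_sort_eq_comp_sort, Tuple.sort_eq_refl_iff_monotone.mpr hμ]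
    rfl

theorem sum_piFinset_eq_sum_monotone_sum_orbit {α M : Type*} [LinearOrder α] [AddCommMonoid M]
    {n : ℕ} (s : Finset α) (f : (Fin n → α) → M) :
    ∑ c ∈ Fintype.piFinset (fun _ => s), f c
      = ∑ μ ∈ (Fintype.piFinset fun _ => s).filter Monotone,
          ∑ c ∈ univ.image (fun σ : Equiv.Perm (Fin n) => μ ∘ σ), f c := by
  have hsort : ∀ c ∈ Fintype.piFinset (fun _ : Fin n => s),
      c ∘ Tuple.sort c ∈ (Fintype.piFinset fun _ => s).filter Monotone := fun c hc =>
    mem_filter.mpr ⟨Fintype.mem_piFinset.mpr fun i => Fintype.mem_piFinset.mp hc _,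
      Tuple.monotone_sort c⟩
  rw [← sum_fiberwise_of_maps_to hsort]
  refine sum_congr rfl fun μ hμ => sum_congr ?_ fun _ _ => rfl
  obtain ⟨hμs, hμ⟩ := mem_filter.mp hμ
  ext c
  simp only [mem_filter, mem_image, mem_univ, true_and,
    Tuple.comp_sort_eq_iff_exists_comp_perm hμ, Fintype.mem_piFinset]
  constructor
  · exact fun h => h.2
  · rintro ⟨σ, rfl⟩
    exact ⟨fun i => Fintype.mem_piFinset.mp hμs _, σ, rfl⟩

theorem mem_partsBdd {n B : ℕ} {lam : Fin n → ℕ} :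
    lam ∈ partsBdd n B ↔ Antitone lam ∧ ∀ i, lam i ≤ B := by
  simp only [partsBdd, mem_image, mem_filter, mem_univ, true_and]
  constructor
  · rintro ⟨f, hf, rfl⟩
    exact ⟨fun i j hij => hf i j hij, fun i => Nat.lt_succ_iff.mp (f i).isLt⟩
  · rintro ⟨hanti, hle⟩
    exact ⟨fun i => ⟨lam i, Nat.lt_succ_of_le (hle i)⟩, fun i j hij => hanti hij, rfl⟩

theorem sum_filter_monotone_eq_sum_partsBdd {M : Type*} [AddCommMonoid M] (n B : ℕ)
    (f : (Fin n → ℕ) → M) :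
    ∑ μ ∈ (Fintype.piFinset fun _ : Fin n => range (B + 1)).filter Monotone, f μ
      = ∑ lam ∈ partsBdd n B, f (fun i => B - lam i) := by
  have hmem : ∀ μ : Fin n → ℕ, μ ∈ (Fintype.piFinset fun _ => range (B + 1)).filter Monotone ↔
      Monotone μ ∧ ∀ i, μ i ≤ B := by
    simp [and_comm]
  refine (sum_nbij' (fun μ i => B - μ i) (fun lam i => B - lam i) ?_ ?_ ?_ ?_ ?_).symm
  · intro lam hlam
    obtain ⟨hanti, -⟩ := mem_partsBdd.mp hlam
    exact (hmem _).mpr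
      ⟨fun i j hij => Nat.sub_le_sub_left (hanti hij) B, fun i => Nat.sub_le B _⟩
  · intro μ hμ
    obtain ⟨hmono, -⟩ := (hmem μ).mp hμ
    exact mem_partsBdd.mpr
      ⟨fun i j hij => Nat.sub_le_sub_left (hmono hij) B, fun i => Nat.sub_le B _⟩
  · intro lam hlam
    funext i
    exact Nat.sub_sub_self ((mem_partsBdd.mp hlam).2 i)
  · intro μ hμ
    funext i
    exact Nat.sub_sub_self (((hmem μ).mp hμ).2 i)
  · exact fun _ _ => rfl

/-- Expansion of the determinant of the Kronecker sum of diagonal matrices: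
`det(x₁ ⊗ I_{n+1} + I_n ⊗ x₂) = ∑_{λ ⊂ n × (n+1)} m_{n+1-λ}(α) b_λ`,
where `b_λ = ∏ₖ e_{λₖ}(β)`. -/
theorem det_kroneckerSum_diagonal_expansion {R : Type*} [CommRing R] (n : ℕ)
    (α : Fin n → R) (β : Fin (n + 1) → R) :
    (Matrix.diagonal α ⊗ₖ (1 : Matrix (Fin (n + 1)) (Fin (n + 1)) R)
      + (1 : Matrix (Fin n) (Fin n) R) ⊗ₖ Matrix.diagonal β).det
      = ∑ lam ∈ partsBdd n (n + 1),
          msym n (fun i => n + 1 - lam i) α * ∏ k : Fin n, esym (n + 1) (lam k) β := by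
  rw [Matrix.det_diagonal_kronecker_one_add_one_kronecker_diagonal]
  simp_rw [prod_add_eq_sum_pow_mul_esym]
  rw [prod_univ_sum, sum_piFinset_eq_sum_monotone_sum_orbit,
    sum_congr rfl fun μ _ => sum_orbit_prod_pow_mul μ α fun k => esym (n + 1) (n + 1 - k) β,
    sum_filter_monotone_eq_sum_partsBdd]
  refine sum_congr rfl fun lam hlam => ?_
  simp_rw [Nat.sub_sub_self ((mem_partsBdd.mp hlam).2 _)]
end

section
/- For $(x_1, x_2, x_3) \in \mathfrak{sl}_2^3$ (traceless $2\times 2$ matrices) with $x_j = \mathrm{diag}(a_j, -a_j)$ diagonal, the determinant of $x_1 \otimes I_2 \otimes I_2 + I_2 \otimes x_2 \otimes I_2 + I_2 \otimes I_2 \otimes x_3 \in \mathfrak{gl}_8$ equals $\big( d_1^2 + d_2^2 + d_3^2 - 2(d_1 d_2 + d_1 d_3 + d_2 d_3) \big)^2$, where $d_j = \det(x_j) = -a_j^2$. -/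
open Kronecker

/-- For traceless diagonal `2 × 2` matrices `xⱼ = diag(aⱼ, -aⱼ)`, the determinant of the
Kronecker sum `x₁ ⊗ I ⊗ I + I ⊗ x₂ ⊗ I + I ⊗ I ⊗ x₃ ∈ 𝔤𝔩₈` equals
`(d₁² + d₂² + d₃² - 2(d₁d₂ + d₁d₃ + d₂d₃))²` where `dⱼ = det xⱼ = -aⱼ²`. -/
theorem det_kroneckerSum_sl2_cube {R : Type*} [CommRing R] (a d : Fin 3 → R)
    (hd : ∀ j, d j = (Matrix.diagonal ![a j, -a j]).det) :
    ((Matrix.diagonal ![a 0, -a 0]) ⊗ₖ (1 : Matrix (Fin 2) (Fin 2) R)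
        ⊗ₖ (1 : Matrix (Fin 2) (Fin 2) R)
      + (1 : Matrix (Fin 2) (Fin 2) R) ⊗ₖ (Matrix.diagonal ![a 1, -a 1])
        ⊗ₖ (1 : Matrix (Fin 2) (Fin 2) R)
      + (1 : Matrix (Fin 2) (Fin 2) R) ⊗ₖ (1 : Matrix (Fin 2) (Fin 2) R)
        ⊗ₖ (Matrix.diagonal ![a 2, -a 2])).det
      = (d 0 ^ 2 + d 1 ^ 2 + d 2 ^ 2
          - 2 * (d 0 * d 1 + d 0 * d 2 + d 1 * d 2)) ^ 2 := by
  have key : ((Matrix.diagonal ![a 0, -a 0]) ⊗ₖ (1 : Matrix (Fin 2) (Fin 2) R)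
        ⊗ₖ (1 : Matrix (Fin 2) (Fin 2) R)
      + (1 : Matrix (Fin 2) (Fin 2) R) ⊗ₖ (Matrix.diagonal ![a 1, -a 1])
        ⊗ₖ (1 : Matrix (Fin 2) (Fin 2) R)
      + (1 : Matrix (Fin 2) (Fin 2) R) ⊗ₖ (1 : Matrix (Fin 2) (Fin 2) R)
        ⊗ₖ (Matrix.diagonal ![a 2, -a 2]))
      = Matrix.diagonal
          (fun x => ![a 0, -a 0] x.1.1 + ![a 1, -a 1] x.1.2 + ![a 2, -a 2] x.2) := by
    rw [← Matrix.diagonal_one, Matrix.diagonal_kronecker_diagonal,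
      Matrix.diagonal_kronecker_diagonal, Matrix.diagonal_kronecker_diagonal,
      Matrix.diagonal_kronecker_diagonal, Matrix.diagonal_kronecker_diagonal,
      Matrix.diagonal_kronecker_diagonal, Matrix.diagonal_add, Matrix.diagonal_add]
    simp [mul_comm]
  rw [key, Matrix.det_diagonal]
  simp only [hd, Matrix.det_diagonal, Fin.prod_univ_two]
  simp [Fintype.prod_prod_type, Fin.prod_univ_two]
  ring
end

section
/- Let $\gamma_1,\dots,\gamma_{m-1}$ be nonzero elements of a field and let $X$ be the tridiagonal antisymmetric $m \times m$ matrix with superdiagonal entries $\gamma_{m-1},\dots,\gamma_1$ (from top-left) and subdiagonal entries their negatives. Then the characteristic polynomial of $X$ is $\det(tI - X) = t^m + \Big(\sum_{i=1}^{m-1} \gamma_i^2\Big) t^{m-2} + \Big(\sum^{(2)}_{1 \le i_1 < i_2 \le m-1} \gamma_{i_1}^2 \gamma_{i_2}^2\Big) t^{m-4} + \cdots$, where the superscript $(2)$ indicates summation over indices satisfying $i_j \le i_{j+1} - 2$ (i.e., no two consecutive indices). -/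
/-- The tridiagonal antisymmetric `m × m` matrix with superdiagonal entries
`γ_{m-1}, …, γ₁` (from top-left) and subdiagonal entries their negatives:
`X_{i, i+1} = γ_{m-i}`, `X_{i+1, i} = -γ_{m-i}` (1-indexed). -/
def triMat {k : Type*} [Field k] (m : ℕ) (γ : ℕ → k) : Matrix (Fin m) (Fin m) k :=
  Matrix.of fun i j =>
    if (j : ℕ) = (i : ℕ) + 1 then γ (m - 1 - (i : ℕ))
    else if (i : ℕ) = (j : ℕ) + 1 then -γ (m - 1 - (j : ℕ))
    else 0

open Finset Polynomial Matrix

def spreadSets (m r : ℕ) : Finset (Finset ℕ) :=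
  (Finset.powersetCard r (Finset.Icc 1 (m - 1))).filter
    (fun s => ∀ i ∈ s, ∀ j ∈ s, i < j → i + 2 ≤ j)

noncomputable def eS {k : Type*} [Field k] (γ : ℕ → k) (m r : ℕ) : k :=
  ∑ s ∈ spreadSets m r, ∏ i ∈ s, γ i ^ 2

lemma eS_zero {k : Type*} [Field k] (γ : ℕ → k) (m : ℕ) : eS γ m 0 = 1 := by
  simp [eS, spreadSets, Finset.filter_singleton]

lemma spreadSets_eq_empty {m r : ℕ} (h : m < 2 * r) : spreadSets m r = ∅ := by
  rw [Finset.eq_empty_iff_forall_notMem]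
  intro s hs
  simp only [spreadSets, mem_filter, mem_powersetCard] at hs
  obtain ⟨⟨hsub, hcard⟩, hspread⟩ := hs
  have hdisj : Disjoint s (s.image (· + 1)) := by
    rw [Finset.disjoint_left]
    intro a ha ha'
    simp only [mem_image] at ha'
    obtain ⟨b, hb, rfl⟩ := ha'
    have := hspread b hb (b+1) ha (by omega)
    omega
  have hcard2 : (s ∪ s.image (· + 1)).card = 2 * r := by
    rw [Finset.card_union_of_disjoint hdisj, Finset.card_image_of_injective _ (add_left_injective 1)]
    omega
  have hsub2 : s ∪ s.image (· + 1) ⊆ Finset.Icc 1 m := by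
    intro a ha
    rw [Finset.mem_union] at ha
    rcases ha with ha | ha
    · have := hsub ha; rw [mem_Icc] at *; omega
    · simp only [mem_image] at ha
      obtain ⟨b, hb, rfl⟩ := ha
      have := hsub hb; rw [mem_Icc] at *; omega
  have := Finset.card_le_card hsub2
  rw [hcard2, Nat.card_Icc] at this
  omega

lemma eS_eq_zero {k : Type*} [Field k] (γ : ℕ → k) {m r : ℕ} (h : m < 2 * r) :
    eS γ m r = 0 := by
  rw [eS, spreadSets_eq_empty h, Finset.sum_empty]

lemma eS_rec {k : Type*} [Field k] (γ : ℕ → k) {m r : ℕ} (hm : 2 ≤ m) (hr : 1 ≤ r) :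
    eS γ m r = eS γ (m-1) r + γ (m-1) ^ 2 * eS γ (m-2) (r-1) := by
  classical
  have hsplit := Finset.sum_filter_add_sum_filter_not (spreadSets m r)
    (fun s => (m-1) ∉ s) (fun s => ∏ i ∈ s, γ i ^ 2)
  rw [eS, ← hsplit]
  congr 1
  · -- sets without m-1 correspond to spreadSets (m-1) r
    rw [eS]
    congr 1
    ext s
    simp only [spreadSets, mem_filter, mem_powersetCard, Finset.subset_iff, mem_Icc]
    constructor
    · rintro ⟨⟨⟨hsub, hcard⟩, hspread⟩, hnot⟩
      refine ⟨⟨fun {a} ha => ?_, hcard⟩, hspread⟩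
      have := hsub ha
      have : a ≠ m - 1 := fun h => hnot (h ▸ ha)
      omega
    · rintro ⟨⟨hsub, hcard⟩, hspread⟩
      refine ⟨⟨⟨fun {a} ha => ?_, hcard⟩, hspread⟩, fun hmem => ?_⟩
      · have := hsub ha; omega
      · have := hsub hmem; omega
  · -- sets containing m-1
    rw [eS, Finset.mul_sum]
    refine Finset.sum_bij' (fun s _ => s.erase (m-1)) (fun s _ => insert (m-1) s)
      ?_ ?_ ?_ ?_ ?_
    · intro s hs
      simp only [spreadSets, mem_filter, mem_powersetCard, not_not] at hs ⊢
      obtain ⟨⟨⟨hsub, hcard⟩, hspread⟩, hmem⟩ := hs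
      refine ⟨⟨fun a ha => ?_, ?_⟩, fun i hi j hj hij => ?_⟩
      · rw [Finset.mem_erase] at ha
        obtain ⟨hne, ha⟩ := ha
        have h1 := hsub ha
        rw [mem_Icc] at h1 ⊢
        -- a ≤ m-1, a ≠ m-1, and a ≠ m-2 (since spread with m-1)
        have : a ≠ m - 2 := by
          intro h
          have := hspread a ha (m-1) hmem (by omega)
          omega
        omega
      · rw [Finset.card_erase_of_mem hmem, hcard]
      · exact hspread i (Finset.mem_of_mem_erase hi) j (Finset.mem_of_mem_erase hj) hij
    · intro s hs
      simp only [spreadSets, mem_filter, mem_powersetCard, not_not] at hs ⊢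
      obtain ⟨⟨hsub, hcard⟩, hspread⟩ := hs
      have hnot : (m-1) ∉ s := by
        intro h
        have := hsub h
        rw [mem_Icc] at this
        omega
      refine ⟨⟨⟨fun a ha => ?_, ?_⟩, fun i hi j hj hij => ?_⟩, Finset.mem_insert_self _ _⟩
      · rw [Finset.mem_insert] at ha
        rw [mem_Icc]
        rcases ha with rfl | ha
        · omega
        · have := hsub ha; rw [mem_Icc] at this; omega
      · rw [Finset.card_insert_of_notMem hnot, hcard]; omega
      · rw [Finset.mem_insert] at hi hj
        rcases hi with rfl | hi
        · rcases hj with rfl | hj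
          · omega
          · have := hsub hj; rw [mem_Icc] at this; omega
        · rcases hj with rfl | hj
          · have := hsub hi; rw [mem_Icc] at this; omega
          · exact hspread i hi j hj hij
    · intro s hs
      simp only [spreadSets, mem_filter, not_not] at hs
      exact Finset.insert_erase hs.2
    · intro s hs
      simp only [spreadSets, mem_filter, mem_powersetCard] at hs
      refine Finset.erase_insert ?_
      intro h
      have := hs.1.1 h
      rw [mem_Icc] at this
      omega
    · intro s hs
      simp only [spreadSets, mem_filter, not_not] at hs
      rw [← Finset.mul_prod_erase s _ hs.2]

noncomputable def Fp {k : Type*} [Field k] (γ : ℕ → k) (m : ℕ) : Polynomial k :=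
  ∑ r ∈ Finset.range (m / 2 + 1), C (eS γ m r) * X ^ (m - 2 * r)

lemma Fp_zero {k : Type*} [Field k] (γ : ℕ → k) : Fp γ 0 = 1 := by
  simp [Fp, eS_zero]

lemma Fp_one {k : Type*} [Field k] (γ : ℕ → k) : Fp γ 1 = X := by
  simp [Fp, eS_zero]

lemma Fp_rec {k : Type*} [Field k] (γ : ℕ → k) (n : ℕ) :
    Fp γ (n+2) = X * Fp γ (n+1) + C (γ (n+1)) ^ 2 * Fp γ n := by
  have key1 : X * Fp γ (n+1)
      = ∑ r ∈ Finset.range ((n+1)/2 + 1), C (eS γ (n+1) r) * X ^ (n+2 - 2*r) := by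
    rw [Fp, Finset.mul_sum]
    refine Finset.sum_congr rfl fun r hr => ?_
    rw [Finset.mem_range] at hr
    have h2r : 2 * r ≤ n + 1 := by omega
    rw [mul_comm X, mul_assoc, ← pow_succ]
    congr 2
    omega
  have key1' : X * Fp γ (n+1)
      = ∑ r ∈ Finset.range (n/2 + 1), C (eS γ (n+1) (r+1)) * X ^ (n+2 - 2*(r+1))
        + C (eS γ (n+1) 0) * X ^ (n+2) := by
    rw [key1, Finset.sum_range_succ' _ ((n+1)/2)]
    congr 1
    refine Finset.sum_subset (Finset.range_subset_range.2 (by omega)) ?_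
    intro i hi hni
    rw [Finset.mem_range] at hi hni
    have : n + 1 < 2 * (i + 1) := by omega
    rw [eS_eq_zero γ this, map_zero, zero_mul]
  have key2 : (C (γ (n+1)))^2 * Fp γ n
      = ∑ r ∈ Finset.range (n/2 + 1), C (γ (n+1)^2 * eS γ n r) * X ^ (n - 2*r) := by
    rw [Fp, Finset.mul_sum]
    refine Finset.sum_congr rfl fun r hr => ?_
    rw [← mul_assoc, ← Polynomial.C_pow, ← Polynomial.C_mul]
  rw [key1', key2, Fp, Finset.sum_range_succ' _ ((n+2)/2)]
  have hrange : (n+2)/2 = n/2 + 1 := by omega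
  rw [hrange]
  have hsum : ∑ r ∈ Finset.range (n/2+1), C (eS γ (n+2) (r+1)) * X ^ (n+2-2*(r+1))
      = ∑ r ∈ Finset.range (n/2+1), (C (eS γ (n+1) (r+1)) * X ^ (n+2-2*(r+1))
          + C (γ (n+1)^2 * eS γ n r) * X ^ (n-2*r)) := by
    refine Finset.sum_congr rfl fun r _ => ?_
    have hrec := eS_rec γ (m := n+2) (r := r+1) (by omega) (by omega)
    norm_num at hrec
    have hexp : n+2-2*(r+1) = n-2*r := by omega
    rw [hrec, map_add, add_mul, hexp]
  rw [hsum, Finset.sum_add_distrib, eS_zero, eS_zero]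
  norm_num
  ring

lemma triMat_submatrix_succ {k : Type*} [Field k] (γ : ℕ → k) (n : ℕ) :
    (triMat (n+1) γ).submatrix Fin.succ Fin.succ = triMat n γ := by
  ext i j
  simp only [Matrix.submatrix_apply, triMat, Matrix.of_apply, Fin.val_succ]
  split_ifs <;>
    first
      | rfl
      | (exfalso; omega)
      | (congr 1; omega)
      | (congr 1; congr 1; omega)

lemma charmatrix_submatrix' {k : Type*} [Field k] {n m : ℕ} (M : Matrix (Fin m) (Fin m) k)
    (f : Fin n → Fin m) (hf : Function.Injective f) :
    (Matrix.charmatrix M).submatrix f f = Matrix.charmatrix (M.submatrix f f) := by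
  ext i j
  simp only [Matrix.submatrix_apply, Matrix.charmatrix_apply, Matrix.diagonal_apply]
  by_cases h : i = j
  · subst h; simp
  · rw [if_neg (fun hc => h (hf hc)), if_neg h]

lemma charmatrix_triMat_apply {k : Type*} [Field k] (γ : ℕ → k) (m : ℕ) (i j : Fin m) :
    (triMat m γ).charmatrix i j
      = if (i:ℕ) = (j:ℕ) then X
        else if (j:ℕ) = (i:ℕ) + 1 then -C (γ (m - 1 - (i:ℕ)))
        else if (i:ℕ) = (j:ℕ) + 1 then C (γ (m - 1 - (j:ℕ)))
        else 0 := by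
  rw [Matrix.charmatrix_apply, Matrix.diagonal_apply]
  simp only [triMat, Matrix.of_apply, Fin.ext_iff]
  split_ifs <;> first | (exfalso; omega) | simp

lemma charpoly_triMat_rec {k : Type*} [Field k] (γ : ℕ → k) (n : ℕ) :
    (triMat (n+2) γ).charpoly
      = X * (triMat (n+1) γ).charpoly + C (γ (n+1)) ^ 2 * (triMat n γ).charpoly := by
  have hsub1 : ((triMat (n+2) γ).charmatrix.submatrix Fin.succ Fin.succ)
      = (triMat (n+1) γ).charmatrix := by
    rw [charmatrix_submatrix' _ _ (Fin.succ_injective _), triMat_submatrix_succ]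
  have hsub2 : (((triMat (n+2) γ).charmatrix.submatrix Fin.succ Fin.succ).submatrix
      Fin.succ Fin.succ) = (triMat n γ).charmatrix := by
    rw [hsub1, charmatrix_submatrix' _ _ (Fin.succ_injective _), triMat_submatrix_succ]
  have h00 : (triMat (n+2) γ).charmatrix 0 0 = X := by
    rw [charmatrix_triMat_apply]; norm_num
  have h01 : (triMat (n+2) γ).charmatrix 0 (0:Fin (n+1)).succ = -C (γ (n+1)) := by
    rw [charmatrix_triMat_apply]; norm_num
  have h10 : (triMat (n+2) γ).charmatrix (0:Fin (n+1)).succ 0 = C (γ (n+1)) := by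
    rw [charmatrix_triMat_apply]; norm_num
  have htail : ∀ j : Fin n, (triMat (n+2) γ).charmatrix 0 j.succ.succ = 0 := by
    intro j
    rw [charmatrix_triMat_apply]
    rw [if_neg (by simp), if_neg (by simp [Fin.val_succ]), if_neg (by simp [Fin.val_succ])]
  have htail' : ∀ j : Fin n, (triMat (n+2) γ).charmatrix j.succ.succ 0 = 0 := by
    intro j
    rw [charmatrix_triMat_apply]
    rw [if_neg (by simp [Fin.val_succ]), if_neg (by simp [Fin.val_succ]),
      if_neg (by simp [Fin.val_succ])]
  rw [Matrix.charpoly, Matrix.det_succ_row_zero, Fin.sum_univ_succ, Fin.sum_univ_succ]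
  simp only [htail, mul_zero, zero_mul, Finset.sum_const_zero, add_zero,
    Fin.succAbove_zero, Fin.val_zero, pow_zero, one_mul, Fin.val_succ, pow_one,
    h00, h01, hsub1]
  rw [Matrix.det_succ_column_zero
    ((triMat (n+2) γ).charmatrix.submatrix Fin.succ (Fin.succ 0).succAbove),
    Fin.sum_univ_succ]
  simp only [Matrix.submatrix_apply, Fin.succ_succAbove_zero, Fin.val_zero, pow_zero, one_mul,
    Fin.val_succ, htail', mul_zero, zero_mul, Finset.sum_const_zero, add_zero, h10,
    Fin.succAbove_zero, Matrix.submatrix_submatrix]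
  have hcol : ((Fin.succ (0:Fin (n+1))).succAbove ∘ Fin.succ) = Fin.succ ∘ Fin.succ := by
    funext j
    simp [Fin.succ_succAbove_succ]
  rw [hcol, ← Matrix.submatrix_submatrix, hsub2, Matrix.charpoly, Matrix.charpoly]
  ring

lemma triMat_charpoly_eq_Fp {k : Type*} [Field k] (γ : ℕ → k) (m : ℕ) :
    (triMat m γ).charpoly = Fp γ m := by
  induction m using Nat.strong_induction_on with
  | _ m ih =>
    match m with
    | 0 => rw [Fp_zero, Matrix.charpoly, Matrix.det_fin_zero]
    | 1 =>
      rw [Fp_one, Matrix.charpoly, Matrix.det_fin_one, charmatrix_triMat_apply]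
      norm_num
    | (n+2) =>
      rw [charpoly_triMat_rec, ih (n+1) (by omega), ih n (by omega), Fp_rec]


/-- The characteristic polynomial of the tridiagonal antisymmetric matrix:
`det(tI - X) = ∑_r (∑^{(2)}_{i₁ < ⋯ < i_r} γ_{i₁}² ⋯ γ_{i_r}²) t^{m - 2r}`, where the
inner sum runs over `r`-element subsets of `{1, …, m-1}` with no two consecutive
indices. -/
theorem triMat_charpoly {k : Type*} [Field k] (m : ℕ) (γ : ℕ → k)
    (hγ : ∀ i, 1 ≤ i → i ≤ m - 1 → γ i ≠ 0) :
    (triMat m γ).charpoly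
      = ∑ r ∈ Finset.range (m / 2 + 1),
          Polynomial.C (∑ s ∈ (Finset.powersetCard r (Finset.Icc 1 (m - 1))).filter
              (fun s => ∀ i ∈ s, ∀ j ∈ s, i < j → i + 2 ≤ j),
            ∏ i ∈ s, γ i ^ 2) * Polynomial.X ^ (m - 2 * r) := by
  rw [triMat_charpoly_eq_Fp]
  simp only [Fp, eS, spreadSets]
end
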